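/- Let χ > 1 be a real number and let m ≥ 1 be an integer. Then χ·P_m(χ) = (2m+1)·O_m(χ) + P_{m−1}(χ). -/

import Mathlib

open Real MeasureTheory

/-- `P χ m = ∫₀^{2π} cos(mφ)/√(χ − cos φ) dφ`. -/
noncomputable def P (χ : ℝ) (m : ℕ) : ℝ :=
  ∫ φ in (0:ℝ)..(2 * Real.pi), Real.cos (m * φ) / Real.sqrt (χ - Real.cos φ)

/-- `O χ m = ∫₀^{2π} cos(mφ)·√(χ − cos φ) dφ`. -/
noncomputable def O (χ : ℝ) (m : ℕ) : ℝ :=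
  ∫ φ in (0:ℝ)..(2 * Real.pi), Real.cos (m * φ) * Real.sqrt (χ - Real.cos φ)

/-!
Writing
`χ / √(χ - cos φ) = √(χ - cos φ) + cos φ / √(χ - cos φ)` and
`2 cos(mφ) cos φ = cos((m+1)φ) + cos((m-1)φ)` gives `P_{m+1} + P_{m-1} = 2 (χ P_m - O_m)`.
Integrating the derivative of `sin(mφ) √(χ - cos φ)` over a period, and using
`2 sin(mφ) sin φ = cos((m-1)φ) - cos((m+1)φ)`, gives `P_{m+1} - P_{m-1} = 4 m O_m`.
Subtracting the two recurrences eliminates `P_{m+1}`.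
-/

lemma cos_natCast_add_two_mul_add_cos (n : ℕ) (φ : ℝ) :
    cos (↑(n + 2) * φ) + cos (n * φ) = 2 * cos (↑(n + 1) * φ) * cos φ := by
  have h₁ : (↑(n + 2) : ℝ) * φ = ↑(n + 1) * φ + φ := by push_cast; ring
  have h₂ : (n : ℝ) * φ = ↑(n + 1) * φ - φ := by push_cast; ring
  rw [h₁, h₂, cos_add, cos_sub]
  ring

lemma cos_sub_cos_natCast_add_two_mul (n : ℕ) (φ : ℝ) :
    cos (n * φ) - cos (↑(n + 2) * φ) = 2 * sin (↑(n + 1) * φ) * sin φ := by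
  have h₁ : (↑(n + 2) : ℝ) * φ = ↑(n + 1) * φ + φ := by push_cast; ring
  have h₂ : (n : ℝ) * φ = ↑(n + 1) * φ - φ := by push_cast; ring
  rw [h₁, h₂, cos_add, cos_sub]
  ring

section

variable {χ : ℝ}

lemma sub_cos_pos (hχ : 1 < χ) (φ : ℝ) : 0 < χ - cos φ :=
  sub_pos.2 ((cos_le_one φ).trans_lt hχ)

lemma sqrt_sub_cos_pos (hχ : 1 < χ) (φ : ℝ) : 0 < √(χ - cos φ) :=
  sqrt_pos.2 (sub_cos_pos hχ φ)

lemma intervalIntegrable_cos_mul_div_sqrt (hχ : 1 < χ) (m : ℕ) {a b : ℝ} :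
    IntervalIntegrable (fun φ => cos (m * φ) / √(χ - cos φ)) volume a b :=
  ((by fun_prop : Continuous fun φ : ℝ => cos (m * φ)).div (by fun_prop)
    fun φ => (sqrt_sub_cos_pos hχ φ).ne').intervalIntegrable a b

lemma intervalIntegrable_cos_mul_mul_sqrt (m : ℕ) {a b : ℝ} :
    IntervalIntegrable (fun φ => cos (m * φ) * √(χ - cos φ)) volume a b :=
  (by fun_prop : Continuous fun φ : ℝ => cos (m * φ) * √(χ - cos φ)).intervalIntegrable a b

lemma P_add_two_add_P (hχ : 1 < χ) (n : ℕ) :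
    P χ (n + 2) + P χ n = 2 * (χ * P χ (n + 1) - O χ (n + 1)) := by
  have key : ∀ φ, cos (↑(n + 2) * φ) / √(χ - cos φ) + cos (n * φ) / √(χ - cos φ)
      = 2 * (χ * (cos (↑(n + 1) * φ) / √(χ - cos φ))
        - cos (↑(n + 1) * φ) * √(χ - cos φ)) := by
    intro φ
    have hs := (sqrt_sub_cos_pos hχ φ).ne'
    have hsq : √(χ - cos φ) ^ 2 = χ - cos φ := sq_sqrt (sub_cos_pos hχ φ).le
    have hcos := cos_natCast_add_two_mul_add_cos n φ
    generalize cos (↑(n + 2) * φ) = a, cos (n * φ) = b, cos (↑(n + 1) * φ) = c at hcos ⊢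
    field_simp
    linear_combination hcos + 2 * c * hsq
  simp only [P, O]
  rw [← intervalIntegral.integral_add (intervalIntegrable_cos_mul_div_sqrt hχ _)
      (intervalIntegrable_cos_mul_div_sqrt hχ _),
    ← intervalIntegral.integral_const_mul,
    ← intervalIntegral.integral_sub
      ((intervalIntegrable_cos_mul_div_sqrt hχ _).const_mul χ)
      (intervalIntegrable_cos_mul_mul_sqrt _),
    ← intervalIntegral.integral_const_mul]
  exact intervalIntegral.integral_congr fun φ _ => key φ

lemma hasDerivAt_sin_mul_sqrt (hχ : 1 < χ) (n : ℕ) (φ : ℝ) :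
    HasDerivAt (fun x => sin (↑(n + 1) * x) * √(χ - cos x))
      ((n + 1) * (cos (↑(n + 1) * φ) * √(χ - cos φ))
        + (cos (n * φ) / √(χ - cos φ) - cos (↑(n + 2) * φ) / √(χ - cos φ)) / 4) φ := by
  have hs := (sqrt_sub_cos_pos hχ φ).ne'
  have hsin : HasDerivAt (fun x => sin (↑(n + 1) * x)) (cos (↑(n + 1) * φ) * ↑(n + 1)) φ := by
    simpa using ((hasDerivAt_id φ).const_mul ((n + 1 : ℕ) : ℝ)).sin
  have hsqrt : HasDerivAt (fun x => √(χ - cos x)) (sin φ / (2 * √(χ - cos φ))) φ := by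
    simpa using ((hasDerivAt_cos φ).const_sub χ).sqrt (sub_cos_pos hχ φ).ne'
  refine (hsin.mul hsqrt).congr_deriv ?_
  have hcos := cos_sub_cos_natCast_add_two_mul n φ
  generalize cos (n * φ) = a, cos (↑(n + 2) * φ) = b, sin (↑(n + 1) * φ) = c at hcos ⊢
  push_cast
  field_simp
  linear_combination -2 * hcos

lemma P_add_two_sub_P (hχ : 1 < χ) (n : ℕ) :
    P χ (n + 2) - P χ n = 4 * (n + 1) * O χ (n + 1) := by
  have hint := intervalIntegral.integral_eq_sub_of_hasDerivAt (a := 0) (b := 2 * π)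
    (fun φ _ => hasDerivAt_sin_mul_sqrt hχ n φ)
    ((((intervalIntegrable_cos_mul_mul_sqrt _).const_mul _).add
      (((intervalIntegrable_cos_mul_div_sqrt hχ _).sub
        (intervalIntegrable_cos_mul_div_sqrt hχ _)).div_const 4)))
  have hsin : sin (↑(n + 1) * (2 * π)) = 0 := by
    rw [← mul_assoc, mul_comm _ (2 : ℝ)]
    exact_mod_cast sin_nat_mul_pi (2 * (n + 1))
  rw [intervalIntegral.integral_add ((intervalIntegrable_cos_mul_mul_sqrt _).const_mul _)
      (((intervalIntegrable_cos_mul_div_sqrt hχ _).sub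
        (intervalIntegrable_cos_mul_div_sqrt hχ _)).div_const 4),
    intervalIntegral.integral_const_mul, intervalIntegral.integral_div,
    intervalIntegral.integral_sub (intervalIntegrable_cos_mul_div_sqrt hχ _)
      (intervalIntegrable_cos_mul_div_sqrt hχ _), hsin] at hint
  simp only [mul_zero, sin_zero, zero_mul, sub_zero] at hint
  simp only [P, O]
  linear_combination -4 * hint

end

theorem stmt_2 (χ : ℝ) (hχ : 1 < χ) (m : ℕ) (hm : 1 ≤ m) :
    χ * P χ m = (2 * m + 1) * O χ m + P χ (m - 1) := by
  obtain ⟨n, rfl⟩ := Nat.exists_eq_add_of_le' hm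
  have hsum := P_add_two_add_P hχ n
  have hdiff := P_add_two_sub_P hχ n
  rw [Nat.add_sub_cancel]
  push_cast
  linear_combination (-hsum + hdiff) / 2
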